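/- arXiv:1707.09545 — 7 statements merged into one kernel-verified Lean document; each statement's English description precedes it below -/
import Mathlib

section
/- In a suffix-clean instance of Stable Marriage, every person a not matched by the man-optimal stable matching μ_M has an empty set of acceptable partners, A(a) = ∅. -/
/-!
An unmatched man `m` and an acceptable woman `w` fail to block `μM` only because `w` is
matched to some `m'` she likes at least as much as `m`; suffix-cleanness says she likes `m`
at least as much as `m'`, so with strict preferences `m' = m`, contradicting that `m` is
unmatched. Women are handled symmetrically with `μW`, which by the Rural Hospitals theorem
leaves the same women unmatched as `μM`.
-/

open scoped Classical

/-- A Stable Marriage instance: `acc` is the mutual acceptability relation,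
`pm m w` is man `m`'s preference value for woman `w` (lower = better),
`pw w m` is woman `w`'s preference value for man `m`. -/
structure SMInst (M W : Type*) where
  acc : M → W → Prop
  pm : M → W → ℕ
  pw : W → M → ℕ

namespace SMInst

variable {M W : Type*} (I : SMInst M W)

/-- A matching, encoded as a relation: matched pairs are acceptable and
each person appears in at most one pair. -/
def IsMatching (r : M → W → Prop) : Prop :=
  (∀ m w, r m w → I.acc m w) ∧
  (∀ m w w', r m w → r m w' → w = w') ∧
  (∀ m m' w, r m w → r m' w → m = m')

/-- `m` is matched by `r`. -/
def MMatched (r : M → W → Prop) (m : M) : Prop := ∃ w, r m w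

/-- `w` is matched by `r`. -/
def WMatched (r : M → W → Prop) (w : W) : Prop := ∃ m, r m w

/-- `(m, w)` blocks `r`: the pair is acceptable, `m` is unmatched or prefers `w`
to his partner, and `w` is unmatched or prefers `m` to her partner. -/
def Blocks (r : M → W → Prop) (m : M) (w : W) : Prop :=
  I.acc m w ∧
  (∀ w', r m w' → I.pm m w < I.pm m w') ∧
  (∀ m', r m' w → I.pw w m < I.pw w m')

/-- A stable matching: a matching with no blocking pair. -/
def IsStable (r : M → W → Prop) : Prop :=
  I.IsMatching r ∧ ∀ m w, ¬ I.Blocks r m w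

/-- Sum of the men's preference values over the pairs of a matching. -/
noncomputable def sumM [Fintype M] [Fintype W] (r : M → W → Prop) : ℕ :=
  ∑ p ∈ Finset.univ.filter (fun p : M × W => r p.1 p.2), I.pm p.1 p.2

/-- Sum of the women's preference values over the pairs of a matching. -/
noncomputable def sumW [Fintype M] [Fintype W] (r : M → W → Prop) : ℕ :=
  ∑ p ∈ Finset.univ.filter (fun p : M × W => r p.1 p.2), I.pw p.2 p.1

/-- Balance of a matching. -/
noncomputable def bal [Fintype M] [Fintype W] (r : M → W → Prop) : ℕ :=
  max (I.sumM r) (I.sumW r)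

/-- Blocking pair for a perfect matching given as an equivalence `M ≃ W`. -/
def BlocksE (e : M ≃ W) (m : M) (w : W) : Prop :=
  I.acc m w ∧ I.pm m w < I.pm m (e m) ∧ I.pw w m < I.pw w (e.symm w)

/-- A stable perfect matching: all matched pairs acceptable, no blocking pair. -/
def IsStableE (e : M ≃ W) : Prop :=
  (∀ m, I.acc m (e m)) ∧ ∀ m w, ¬ I.BlocksE e m w

/-- Sum of the men's preference values in a perfect matching. -/
def sumME [Fintype M] (e : M ≃ W) : ℕ := ∑ m, I.pm m (e m)

/-- Sum of the women's preference values in a perfect matching. -/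
def sumWE [Fintype W] (e : M ≃ W) : ℕ := ∑ w, I.pw w (e.symm w)

/-- Balance of a perfect matching. -/
def balE [Fintype M] [Fintype W] (e : M ≃ W) : ℕ := max (I.sumME e) (I.sumWE e)

end SMInst

namespace SMInst

variable {M W : Type*} {I : SMInst M W} {μ : M → W → Prop} {m : M} {w : W}

theorem IsStable.exists_pw_le_of_not_mMatched (hμ : I.IsStable μ) (hacc : I.acc m w)
    (hm : ¬ MMatched μ m) : ∃ m', μ m' w ∧ I.pw w m' ≤ I.pw w m := by
  by_contra! h
  exact hμ.2 m w ⟨hacc, fun w' hw' => (hm ⟨w', hw'⟩).elim, h⟩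

theorem IsStable.exists_pm_le_of_not_wMatched (hμ : I.IsStable μ) (hacc : I.acc m w)
    (hw : ¬ WMatched μ w) : ∃ w', μ m w' ∧ I.pm m w' ≤ I.pm m w := by
  by_contra! h
  exact hμ.2 m w ⟨hacc, h, fun m' hm' => (hw ⟨m', hm'⟩).elim⟩

theorem IsStable.not_acc_of_not_mMatched (hμ : I.IsStable μ)
    (hinj : ∀ m m', I.acc m w → I.acc m' w → I.pw w m = I.pw w m' → m = m')
    (hm : ¬ MMatched μ m) (hclean : ∀ m', μ m' w → I.pw w m ≤ I.pw w m') :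
    ¬ I.acc m w := by
  intro hacc
  obtain ⟨m', hm'w, hle⟩ := hμ.exists_pw_le_of_not_mMatched hacc hm
  have hm' : m' = m := hinj m' m (hμ.1.1 m' w hm'w) hacc (le_antisymm hle (hclean m' hm'w))
  exact hm ⟨w, hm' ▸ hm'w⟩

theorem IsStable.not_acc_of_not_wMatched (hμ : I.IsStable μ)
    (hinj : ∀ w w', I.acc m w → I.acc m w' → I.pm m w = I.pm m w' → w = w')
    (hw : ¬ WMatched μ w) (hclean : ∀ w', μ m w' → I.pm m w ≤ I.pm m w') :
    ¬ I.acc m w := by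
  intro hacc
  obtain ⟨w', hmw', hle⟩ := hμ.exists_pm_le_of_not_wMatched hacc hw
  have hw' : w' = w := hinj w' w (hμ.1.1 m w' hmw') hacc (le_antisymm hle (hclean w' hmw'))
  exact hw ⟨m, hw' ▸ hmw'⟩

end SMInst

/-- In a suffix-clean instance, every person not matched by μ_M has
an empty set of acceptable partners. -/
theorem unmatched_has_no_acceptable_partner {M W : Type*} (I : SMInst M W)
    (μM μW : M → W → Prop) (hμM : I.IsStable μM) (hμW : I.IsStable μW)
    (hinjm : ∀ m w w', I.acc m w → I.acc m w' → I.pm m w = I.pm m w' → w = w')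
    (hinjw : ∀ w m m', I.acc m w → I.acc m' w → I.pw w m = I.pw w m' → m = m')
    (hruralHospitals : ∀ μ : M → W → Prop, I.IsStable μ →
      (∀ m, SMInst.MMatched μ m ↔ SMInst.MMatched μM m) ∧
      (∀ w, SMInst.WMatched μ w ↔ SMInst.WMatched μM w))
    (hsuffixClean : ∀ m w, I.acc m w →
      (∀ w', μW m w' → I.pm m w ≤ I.pm m w') ∧
      (∀ m', μM m' w → I.pw w m ≤ I.pw w m')) :
    (∀ m, ¬ SMInst.MMatched μM m → ∀ w, ¬ I.acc m w) ∧
    (∀ w, ¬ SMInst.WMatched μM w → ∀ m, ¬ I.acc m w) := by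
  constructor
  · intro m hm w hacc
    exact hμM.not_acc_of_not_mMatched (hinjw w) hm (hsuffixClean m w hacc).2 hacc
  · intro w hw m hacc
    have hwW : ¬ SMInst.WMatched μW w := mt ((hruralHospitals μW hμW).2 w).mp hw
    exact hμW.not_acc_of_not_wMatched (hinjm m) hwW (hsuffixClean m w hacc).1 hacc
end

section
/- Let μ be a stable matching in which every person is matched (perfect), and suppose k ≥ max(O_M, O_W) and balance(μ) ≤ k, where t = k − min(O_M, O_W). Define S to be the set of men m with μ_M(m) ≠ μ_W(m) (sad men). Then |S| ≤ 2t. -/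
/-!
Preferences are injective and `μM` is man-optimal, so every man whose `μ`-partner differs from
his `μM`-partner gains at least one unit of preference value in `μ`; hence there are at most
`sumME μ - O_M ≤ k - O_M` such men, and symmetrically at most `k - O_W` women whose
`μ`-partner differs from their `μW`-partner. A sad man has `μ m ≠ μM m` or `μ m ≠ μW m`
(triangle inequality for the Hamming distance), and the men of the second kind are sent by `μ`
bijectively onto the women of the second kind.
-/

open scoped Classical

theorem hammingDist_add_sum_le_sum {ι : Type*} [Fintype ι] {a b : ι → ℕ} (h : a ≤ b) :
    hammingDist a b + ∑ i, a i ≤ ∑ i, b i := by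
  rw [hammingDist, Finset.card_filter, ← Finset.sum_add_distrib]
  refine Finset.sum_le_sum fun i _ => ?_
  have hi : a i ≤ b i := h i
  split_ifs <;> omega

theorem Equiv.hammingDist_symm {α β : Type*} [Fintype α] [Fintype β] [DecidableEq α]
    [DecidableEq β] (e f : α ≃ β) : hammingDist ⇑e.symm ⇑f.symm = hammingDist ⇑e ⇑f := by
  refine Finset.card_equiv e.symm fun w => ?_
  simp only [Finset.mem_filter, Finset.mem_univ, true_and, Equiv.apply_symm_apply]
  rw [ne_comm, ne_eq, ne_eq, f.symm_apply_eq]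

namespace SMInst

variable {M W : Type*} (I : SMInst M W)

theorem hammingDist_add_sumME_le [Fintype M] {μ ν : M ≃ W}
    (hμ : ∀ m, I.acc m (μ m)) (hν : ∀ m, I.acc m (ν m))
    (hinj : ∀ m w w', I.acc m w → I.acc m w' → I.pm m w = I.pm m w' → w = w')
    (hopt : ∀ m, I.pm m (ν m) ≤ I.pm m (μ m)) :
    hammingDist ⇑ν ⇑μ + I.sumME ν ≤ I.sumME μ := by
  have hdist : hammingDist ⇑ν ⇑μ ≤
      hammingDist (fun m => I.pm m (ν m)) (fun m => I.pm m (μ m)) := by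
    unfold hammingDist
    gcongr with m
    exact hinj m _ _ (hν m) (hμ m)
  have := hammingDist_add_sum_le_sum (a := fun m => I.pm m (ν m)) hopt
  unfold sumME
  omega

theorem hammingDist_symm_add_sumWE_le [Fintype W] {μ ν : M ≃ W}
    (hμ : ∀ m, I.acc m (μ m)) (hν : ∀ m, I.acc m (ν m))
    (hinj : ∀ w m m', I.acc m w → I.acc m' w → I.pw w m = I.pw w m' → m = m')
    (hopt : ∀ w, I.pw w (ν.symm w) ≤ I.pw w (μ.symm w)) :
    hammingDist ⇑ν.symm ⇑μ.symm + I.sumWE ν ≤ I.sumWE μ := by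
  have hacc (e : M ≃ W) (he : ∀ m, I.acc m (e m)) (w : W) : I.acc (e.symm w) w := by
    simpa using he (e.symm w)
  have hdist : hammingDist ⇑ν.symm ⇑μ.symm ≤
      hammingDist (fun w => I.pw w (ν.symm w)) (fun w => I.pw w (μ.symm w)) := by
    unfold hammingDist
    gcongr with w
    exact hinj w _ _ (hacc ν hν w) (hacc μ hμ w)
  have := hammingDist_add_sum_le_sum (a := fun w => I.pw w (ν.symm w)) hopt
  unfold sumWE
  omega

end SMInst

theorem sad_men_at_most_two_t_general {M W : Type*} [Fintype M] [Fintype W] (I : SMInst M W)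
    (μ μM μW : M ≃ W) (k : ℕ)
    (hμ : I.IsStableE μ) (hμM : I.IsStableE μM) (hμW : I.IsStableE μW)
    (hinjm : ∀ m w w', I.acc m w → I.acc m w' → I.pm m w = I.pm m w' → w = w')
    (hinjw : ∀ w m m', I.acc m w → I.acc m' w → I.pw w m = I.pw w m' → m = m')
    (hmanOpt : ∀ e : M ≃ W, I.IsStableE e → ∀ m, I.pm m (μM m) ≤ I.pm m (e m))
    (hwomanOpt : ∀ e : M ≃ W, I.IsStableE e → ∀ w, I.pw w (μW.symm w) ≤ I.pw w (e.symm w))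
    (hbal : I.balE μ ≤ k) :
    (Finset.univ.filter fun m : M => μM m ≠ μW m).card
      ≤ 2 * (k - min (I.sumME μM) (I.sumWE μW)) := by
  have hmen := I.hammingDist_add_sumME_le hμ.1 hμM.1 hinjm (hmanOpt μ hμ)
  have hwomen := I.hammingDist_symm_add_sumWE_le hμ.1 hμW.1 hinjw (hwomanOpt μ hμ)
  rw [Equiv.hammingDist_symm] at hwomen
  have hsumM : I.sumME μ ≤ k := (le_max_left _ _).trans hbal
  have hsumW : I.sumWE μ ≤ k := (le_max_right _ _).trans hbal
  have htriangle := hammingDist_triangle_right ⇑μM ⇑μW ⇑μ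
  change hammingDist ⇑μM ⇑μW ≤ _
  omega

/-- If all stable matchings are perfect, k ≥ max(O_M, O_W),
balance(μ) ≤ k and t = k − min(O_M, O_W), then the number of sad men
(men with μ_M(m) ≠ μ_W(m)) is at most 2t. -/
theorem sad_men_at_most_two_t {M W : Type*} [Fintype M] [Fintype W] (I : SMInst M W)
    (μ μM μW : M ≃ W) (k : ℕ)
    (hμ : I.IsStableE μ) (hμM : I.IsStableE μM) (hμW : I.IsStableE μW)
    (hinjm : ∀ m w w', I.acc m w → I.acc m w' → I.pm m w = I.pm m w' → w = w')
    (hinjw : ∀ w m m', I.acc m w → I.acc m' w → I.pw w m = I.pw w m' → m = m')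
    (hmanOpt : ∀ e : M ≃ W, I.IsStableE e → ∀ m, I.pm m (μM m) ≤ I.pm m (e m))
    (hwomanOpt : ∀ e : M ≃ W, I.IsStableE e → ∀ w, I.pw w (μW.symm w) ≤ I.pw w (e.symm w))
    (hk : max (I.sumME μM) (I.sumWE μW) ≤ k)
    (hbal : I.balE μ ≤ k) :
    (Finset.univ.filter fun m : M => μM m ≠ μW m).card
      ≤ 2 * (k - min (I.sumME μM) (I.sumWE μW)) :=
  sad_men_at_most_two_t_general I μ μM μW k hμ hμM hμW hinjm hinjw hmanOpt hwomanOpt hbal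
end

section
/- Let I be a Functional Stable Marriage instance with a happy pair (m_h, w_h) whose only acceptable partners are each other, and let J be the instance obtained by deleting m_h and w_h and, for a chosen sad man m_s and sad woman w_s, adding f_{m_h}(w_h) to all of m_s's preference values and f_{w_h}(m_h) to all of w_s's preference values. Then for every stable matching μ of I, μ' = μ \ {(m_h,w_h)} is a stable matching of J with balance_J(μ') = balance_I(μ). -/
open scoped Classical

/-!
A perfect matching `μ` is a bijection `e : M ≃ W`; since `m_h` and `w_h` are acceptable only
to each other, `e` sends `m_h` to `w_h` and restricts to a bijection between the remaining
men and women. A blocking pair of the restriction in `J` would block `μ` in `I`: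
the partners of a remaining person are again remaining people, and shifting a person's
preference values by a constant does not change the order. For the balance, the values of
the happy pair, which disappear from the sums, reappear as the shifts of `m_s` and `w_s`.
-/

open Finset

namespace SMInst

variable {M W : Type*}

theorem exists_equiv_of_isMatching {I : SMInst M W} {r : M → W → Prop} (h : I.IsMatching r)
    (hM : ∀ m, MMatched r m) (hW : ∀ w, WMatched r w) :
    ∃ e : M ≃ W, ∀ m w, r m w ↔ e m = w := by
  obtain ⟨-, hfun, hinj⟩ := h
  choose f hf using hM
  have hbij : Function.Bijective f := by
    refine ⟨fun m m' hmm' => hinj m m' (f m) (hf m) (hmm' ▸ hf m'), fun w => ?_⟩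
    obtain ⟨m, hm⟩ := hW w
    exact ⟨m, hfun m _ _ (hf m) hm⟩
  refine ⟨Equiv.ofBijective f hbij, fun m w => ⟨fun hmw => hfun m _ _ (hf m) hmw, ?_⟩⟩
  rintro rfl
  exact hf m

theorem sum_filter_graph {β : Type*} [AddCommMonoid β] [Fintype M] [Fintype W]
    {r : M → W → Prop} {f : M → W} (hr : ∀ m w, r m w ↔ f m = w) (g : M → W → β) :
    ∑ p ∈ univ.filter (fun p : M × W => r p.1 p.2), g p.1 p.2 = ∑ m, g m (f m) := by
  simp_rw [hr, sum_filter, Fintype.sum_prod_type, sum_ite_eq, if_pos (mem_univ _)]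

theorem sumM_eq_sum_of_graph [Fintype M] [Fintype W] (I : SMInst M W) {r : M → W → Prop}
    {f : M → W} (hr : ∀ m w, r m w ↔ f m = w) : I.sumM r = ∑ m, I.pm m (f m) :=
  sum_filter_graph hr I.pm

theorem sumW_eq_sum_of_graph [Fintype M] [Fintype W] (I : SMInst M W) {r : M → W → Prop}
    {e : M ≃ W} (hr : ∀ m w, r m w ↔ e m = w) : I.sumW r = ∑ w, I.pw w (e.symm w) := by
  rw [sumW, sum_filter_graph hr (fun m w => I.pw w m), ← e.sum_comp]
  simp only [Equiv.symm_apply_apply]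

section Restriction

variable {P : M → Prop} {Q : W → Prop} (I : SMInst M W) (J : SMInst (Subtype P) (Subtype Q))
  {r : M → W → Prop} {cM : Subtype P → ℕ} {cW : Subtype Q → ℕ}

theorem isMatching_restrict (hacc : ∀ m w, J.acc m w ↔ I.acc m.1 w.1) (h : I.IsMatching r) :
    J.IsMatching (fun m w => r m.1 w.1) :=
  ⟨fun m w hmw => (hacc m w).2 (h.1 _ _ hmw),
    fun _ _ _ hw hw' => Subtype.ext (h.2.1 _ _ _ hw hw'),
    fun _ _ _ hm hm' => Subtype.ext (h.2.2 _ _ _ hm hm')⟩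

theorem blocks_of_blocks_restrict (hacc : ∀ m w, J.acc m w ↔ I.acc m.1 w.1)
    (hpm : ∀ m w, J.pm m w = I.pm m.1 w.1 + cM m) (hpw : ∀ w m, J.pw w m = I.pw w.1 m.1 + cW w)
    (hpart : ∀ m w, I.acc m w → (P m ↔ Q w)) (hr : ∀ m w, r m w → I.acc m w)
    {m : Subtype P} {w : Subtype Q} (hb : J.Blocks (fun m w => r m.1 w.1) m w) :
    I.Blocks r m.1 w.1 := by
  obtain ⟨hmw, hm, hw⟩ := hb
  refine ⟨(hacc m w).1 hmw, fun w' hw' => ?_, fun m' hm' => ?_⟩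
  · have := hm ⟨w', (hpart _ _ (hr _ _ hw')).1 m.2⟩ hw'
    rwa [hpm, hpm, add_lt_add_iff_right] at this
  · have := hw ⟨m', (hpart _ _ (hr _ _ hm')).2 w.2⟩ hm'
    rwa [hpw, hpw, add_lt_add_iff_right] at this

theorem isStable_restrict (hacc : ∀ m w, J.acc m w ↔ I.acc m.1 w.1)
    (hpm : ∀ m w, J.pm m w = I.pm m.1 w.1 + cM m) (hpw : ∀ w m, J.pw w m = I.pw w.1 m.1 + cW w)
    (hpart : ∀ m w, I.acc m w → (P m ↔ Q w)) (h : I.IsStable r) :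
    J.IsStable (fun m w => r m.1 w.1) :=
  ⟨isMatching_restrict I J hacc h.1, fun _ _ hb =>
    h.2 _ _ (blocks_of_blocks_restrict I J hacc hpm hpw hpart h.1.1 hb)⟩

end Restriction

end SMInst

theorem Fintype.sum_subtype_ne_add_ite {α β : Type*} [AddCommMonoid β] [Fintype α]
    [DecidableEq α] (g : α → β) {a b : α} (hb : b ≠ a) :
    ∑ x : {x // x ≠ a}, (g x + if x.1 = b then g a else 0) = ∑ x, g x := by
  have hsingle : ∀ x : {x // x ≠ a}, x.1 = b ↔ x = ⟨b, hb⟩ := fun x => by rw [Subtype.ext_iff]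
  simp_rw [sum_add_distrib, hsingle, Finset.sum_ite_eq', if_pos (mem_univ _),
    Fintype.sum_eq_add_sum_subtype_ne g a, add_comm]

/-- Happy-pair removal, forward direction. If μ is a stable
(perfect) matching of I, then its restriction μ' = μ \ {(m_h, w_h)} is a
stable matching of the reduced instance J with balance_J(μ') = balance_I(μ). -/
theorem happy_pair_removal_forward {M W : Type*} [Fintype M] [Fintype W]
    (I : SMInst M W) (m_h m_s : M) (w_h w_s : W)
    (hms : m_s ≠ m_h) (hws : w_s ≠ w_h)
    (haccmh : ∀ w, I.acc m_h w ↔ w = w_h)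
    (haccwh : ∀ m, I.acc m w_h ↔ m = m_h)
    (J : SMInst {m : M // m ≠ m_h} {w : W // w ≠ w_h})
    (hJacc : ∀ m w, J.acc m w ↔ I.acc m.1 w.1)
    (hJpm : ∀ m w, J.pm m w =
      if m.1 = m_s then I.pm m.1 w.1 + I.pm m_h w_h else I.pm m.1 w.1)
    (hJpw : ∀ w m, J.pw w m =
      if w.1 = w_s then I.pw w.1 m.1 + I.pw w_h m_h else I.pw w.1 m.1)
    (μ : M → W → Prop) (hst : I.IsStable μ)
    (hperfM : ∀ m, SMInst.MMatched μ m) (hperfW : ∀ w, SMInst.WMatched μ w) :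
    J.IsStable (fun m w => μ m.1 w.1) ∧
    J.bal (fun m w => μ m.1 w.1) = I.bal μ := by
  have hpart : ∀ m w, I.acc m w → (m ≠ m_h ↔ w ≠ w_h) := fun m w hmw =>
    not_congr ⟨fun h => (haccmh w).1 (h ▸ hmw), fun h => (haccwh m).1 (h ▸ hmw)⟩
  have hJpm' : ∀ m w, J.pm m w = I.pm m.1 w.1 + if m.1 = m_s then I.pm m_h w_h else 0 := by
    intro m w; rw [hJpm]; split_ifs <;> rfl
  have hJpw' : ∀ w m, J.pw w m = I.pw w.1 m.1 + if w.1 = w_s then I.pw w_h m_h else 0 := by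
    intro w m; rw [hJpw]; split_ifs <;> rfl
  refine ⟨SMInst.isStable_restrict I J hJacc hJpm' hJpw' hpart hst, ?_⟩
  obtain ⟨e, he⟩ := SMInst.exists_equiv_of_isMatching hst.1 hperfM hperfW
  have heh : e m_h = w_h := (haccmh _).1 (hst.1.1 _ _ ((he _ _).2 rfl))
  let e' : {m // m ≠ m_h} ≃ {w // w ≠ w_h} :=
    e.subtypeEquiv fun m => (e.injective.ne_iff' heh).symm
  have he' : ∀ m w, μ m.1 w.1 ↔ e' m = w := fun m w => by rw [he, Subtype.ext_iff]; rfl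
  have hsumM : J.sumM (fun m w => μ m.1 w.1) = I.sumM μ := by
    rw [J.sumM_eq_sum_of_graph he', I.sumM_eq_sum_of_graph he,
      ← Fintype.sum_subtype_ne_add_ite (fun m => I.pm m (e m)) hms, heh]
    exact Fintype.sum_congr _ _ fun m => hJpm' _ _
  have hsumW : J.sumW (fun m w => μ m.1 w.1) = I.sumW μ := by
    rw [J.sumW_eq_sum_of_graph he', I.sumW_eq_sum_of_graph he,
      ← Fintype.sum_subtype_ne_add_ite (fun w => I.pw w (e.symm w)) hws,
      e.symm_apply_eq.2 heh.symm]
    exact Fintype.sum_congr _ _ fun w => hJpw' _ _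
  rw [SMInst.bal, SMInst.bal, hsumM, hsumW]
end

section
/- With I and J as in the happy-pair removal rule, for every stable matching μ' of J, μ = μ' ∪ {(m_h, w_h)} is a stable matching of I with balance_I(μ) = balance_J(μ'). -/
open scoped Classical

/-!
The happy pair is acceptable only to each other, so it can take part in no blocking pair of
`μ = μ' ∪ {(m_h, w_h)}`; any other blocking pair of `μ` in `I` blocks `μ'` in `J`, since `J`
shifts all preference values of one agent by the same constant, which preserves their order.
For the balance, each sum over `μ` in `I` is the happy pair's value plus the sum over `μ'` of
`I`'s values, while in `J` the perfect matching `μ'` picks up the shift of `m_s` (of `w_s`)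
exactly once.
-/

namespace SMInst

section Sums

variable {M W : Type*} [Fintype M] [Fintype W] {I : SMInst M W} {r : M → W → Prop}

theorem IsMatching.sum_filter_fst (hr : I.IsMatching r)
    (hM : ∀ m, MMatched r m) {β : Type*} [AddCommMonoid β] (f : M → β) :
    ∑ p ∈ Finset.univ.filter (fun p : M × W => r p.1 p.2), f p.1 = ∑ m, f m := by
  refine Finset.sum_nbij Prod.fst (fun _ _ => Finset.mem_univ _) ?_ ?_ (fun _ _ => rfl)
  · rintro ⟨m, w⟩ hmw ⟨m', w'⟩ hmw' (rfl : m = m')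
    simp only [Finset.coe_filter, Finset.mem_univ, true_and, Set.mem_ofPred_eq] at hmw hmw'
    rw [hr.2.1 m w w' hmw hmw']
  · intro m _
    obtain ⟨w, hmw⟩ := hM m
    exact ⟨(m, w), by simpa using hmw, rfl⟩

theorem IsMatching.sum_filter_snd (hr : I.IsMatching r)
    (hW : ∀ w, WMatched r w) {β : Type*} [AddCommMonoid β] (f : W → β) :
    ∑ p ∈ Finset.univ.filter (fun p : M × W => r p.1 p.2), f p.2 = ∑ w, f w := by
  refine Finset.sum_nbij Prod.snd (fun _ _ => Finset.mem_univ _) ?_ ?_ (fun _ _ => rfl)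
  · rintro ⟨m, w⟩ hmw ⟨m', w'⟩ hmw' (rfl : w = w')
    simp only [Finset.coe_filter, Finset.mem_univ, true_and, Set.mem_ofPred_eq] at hmw hmw'
    rw [hr.2.2 m m' w hmw hmw']
  · intro w _
    obtain ⟨m, hmw⟩ := hW w
    exact ⟨(m, w), by simpa using hmw, rfl⟩

theorem sumM_eq_add_of_pm_eq_add (hr : I.IsMatching r)
    (hM : ∀ m, MMatched r m) {g : M → W → ℕ} {a : M → ℕ} (hpm : ∀ m w, I.pm m w = g m w + a m) :
    I.sumM r = ∑ p ∈ Finset.univ.filter (fun p : M × W => r p.1 p.2), g p.1 p.2 + ∑ m, a m := by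
  rw [sumM, ← hr.sum_filter_fst hM, ← Finset.sum_add_distrib]
  exact Finset.sum_congr rfl fun p _ => hpm p.1 p.2

theorem sumW_eq_add_of_pw_eq_add (hr : I.IsMatching r)
    (hW : ∀ w, WMatched r w) {g : W → M → ℕ} {b : W → ℕ} (hpw : ∀ w m, I.pw w m = g w m + b w) :
    I.sumW r = ∑ p ∈ Finset.univ.filter (fun p : M × W => r p.1 p.2), g p.2 p.1 + ∑ w, b w := by
  rw [sumW, ← hr.sum_filter_snd hW, ← Finset.sum_add_distrib]
  exact Finset.sum_congr rfl fun p _ => hpw p.2 p.1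

end Sums

section AddPair

variable {M W : Type*} {m₀ : M} {w₀ : W}

def addPair (m₀ : M) (w₀ : W) (μ : {m // m ≠ m₀} → {w // w ≠ w₀} → Prop) : M → W → Prop :=
  fun m w => (m = m₀ ∧ w = w₀) ∨ ∃ (hm : m ≠ m₀) (hw : w ≠ w₀), μ ⟨m, hm⟩ ⟨w, hw⟩

variable {I : SMInst M W} {J : SMInst {m // m ≠ m₀} {w // w ≠ w₀}}
  {μ : {m // m ≠ m₀} → {w // w ≠ w₀} → Prop}

theorem isMatching_addPair (h₀ : I.acc m₀ w₀) (hJacc : ∀ m w, J.acc m w → I.acc m.1 w.1)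
    (hμ : J.IsMatching μ) : I.IsMatching (addPair m₀ w₀ μ) := by
  refine ⟨?_, ?_, ?_⟩
  · rintro m w (⟨rfl, rfl⟩ | ⟨hm, hw, h⟩)
    · exact h₀
    · exact hJacc _ _ (hμ.1 _ _ h)
  · rintro m w w' (⟨rfl, rfl⟩ | ⟨hm, hw, h⟩) (⟨hm', rfl⟩ | ⟨hm', hw', h'⟩)
    · rfl
    · exact (hm' rfl).elim
    · exact absurd hm' hm
    · exact congrArg Subtype.val (hμ.2.1 _ _ _ h h')
  · rintro m m' w (⟨rfl, rfl⟩ | ⟨hm, hw, h⟩) (⟨rfl, hw'⟩ | ⟨hm', hw', h'⟩)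
    · rfl
    · exact (hw' rfl).elim
    · exact absurd hw' hw
    · exact congrArg Subtype.val (hμ.2.2 _ _ _ h h')

theorem not_blocks_addPair (hm₀ : ∀ w, I.acc m₀ w → w = w₀) (hw₀ : ∀ m, I.acc m w₀ → m = m₀)
    (hJacc : ∀ m w, I.acc m.1 w.1 → J.acc m w) {a : {m // m ≠ m₀} → ℕ} {b : {w // w ≠ w₀} → ℕ}
    (hpm : ∀ m w, J.pm m w = I.pm m.1 w.1 + a m) (hpw : ∀ w m, J.pw w m = I.pw w.1 m.1 + b w)
    (hμ : ∀ m w, ¬ J.Blocks μ m w) (m : M) (w : W) : ¬ I.Blocks (addPair m₀ w₀ μ) m w := by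
  rintro ⟨hacc, hbm, hbw⟩
  by_cases hm : m = m₀
  · subst hm
    obtain rfl := hm₀ w hacc
    exact lt_irrefl _ (hbm w (Or.inl ⟨rfl, rfl⟩))
  by_cases hw : w = w₀
  · exact hm (hw₀ m (hw ▸ hacc))
  refine hμ ⟨m, hm⟩ ⟨w, hw⟩ ⟨hJacc _ _ hacc, fun w' h' => ?_, fun m' h' => ?_⟩
  · rw [hpm, hpm]
    exact Nat.add_lt_add_right (hbm w'.1 (Or.inr ⟨hm, w'.2, h'⟩)) _
  · rw [hpw, hpw]
    exact Nat.add_lt_add_right (hbw m'.1 (Or.inr ⟨m'.2, hw, h'⟩)) _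

theorem isStable_addPair (h₀ : I.acc m₀ w₀) (hm₀ : ∀ w, I.acc m₀ w → w = w₀)
    (hw₀ : ∀ m, I.acc m w₀ → m = m₀) (hJacc : ∀ m w, J.acc m w ↔ I.acc m.1 w.1)
    {a : {m // m ≠ m₀} → ℕ} {b : {w // w ≠ w₀} → ℕ}
    (hpm : ∀ m w, J.pm m w = I.pm m.1 w.1 + a m) (hpw : ∀ w m, J.pw w m = I.pw w.1 m.1 + b w)
    (hμ : J.IsStable μ) : I.IsStable (addPair m₀ w₀ μ) :=
  ⟨isMatching_addPair h₀ (fun m w => (hJacc m w).1) hμ.1,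
    not_blocks_addPair hm₀ hw₀ (fun m w => (hJacc m w).2) hpm hpw hμ.2⟩

variable [Fintype M] [Fintype W]

theorem filter_addPair :
    Finset.univ.filter (fun p : M × W => addPair m₀ w₀ μ p.1 p.2) =
      insert (m₀, w₀) ((Finset.univ.filter fun p => μ p.1 p.2).map
        ((Function.Embedding.subtype _).prodMap (Function.Embedding.subtype _))) := by
  ext ⟨m, w⟩
  rw [Finset.mem_filter, Finset.mem_insert, Finset.mem_map]
  simp only [addPair, Finset.mem_filter, Finset.mem_univ, true_and, Prod.mk.injEq,
    Function.Embedding.coe_prodMap, Prod.map, Function.Embedding.subtype_apply, Prod.exists,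
    Subtype.exists]
  constructor
  · rintro (h | ⟨hm, hw, h⟩)
    · exact Or.inl h
    · exact Or.inr ⟨m, hm, w, hw, h, rfl, rfl⟩
  · rintro (h | ⟨m, hm, w, hw, h, rfl, rfl⟩)
    · exact Or.inl h
    · exact Or.inr ⟨hm, hw, h⟩

theorem sumM_addPair : I.sumM (addPair m₀ w₀ μ) =
    I.pm m₀ w₀ + ∑ p ∈ Finset.univ.filter (fun p : {m // m ≠ m₀} × {w // w ≠ w₀} => μ p.1 p.2),
      I.pm p.1.1 p.2.1 := by
  rw [sumM, filter_addPair, Finset.sum_insert (by simp), Finset.sum_map]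
  rfl

theorem sumW_addPair : I.sumW (addPair m₀ w₀ μ) =
    I.pw w₀ m₀ + ∑ p ∈ Finset.univ.filter (fun p : {m // m ≠ m₀} × {w // w ≠ w₀} => μ p.1 p.2),
      I.pw p.2.1 p.1.1 := by
  rw [sumW, filter_addPair, Finset.sum_insert (by simp), Finset.sum_map]
  rfl

end AddPair

end SMInst

/-- Happy-pair removal, reverse direction. If μ' is a stable
(perfect) matching of the reduced instance J, then μ = μ' ∪ {(m_h, w_h)} is a
stable matching of I with balance_I(μ) = balance_J(μ'). -/
theorem happy_pair_removal_backward {M W : Type*} [Fintype M] [Fintype W]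
    (I : SMInst M W) (m_h m_s : M) (w_h w_s : W)
    (hms : m_s ≠ m_h) (hws : w_s ≠ w_h)
    (haccmh : ∀ w, I.acc m_h w ↔ w = w_h)
    (haccwh : ∀ m, I.acc m w_h ↔ m = m_h)
    (hacchh : I.acc m_h w_h)
    (J : SMInst {m : M // m ≠ m_h} {w : W // w ≠ w_h})
    (hJacc : ∀ m w, J.acc m w ↔ I.acc m.1 w.1)
    (hJpm : ∀ m w, J.pm m w =
      if m.1 = m_s then I.pm m.1 w.1 + I.pm m_h w_h else I.pm m.1 w.1)
    (hJpw : ∀ w m, J.pw w m =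
      if w.1 = w_s then I.pw w.1 m.1 + I.pw w_h m_h else I.pw w.1 m.1)
    (μ' : {m : M // m ≠ m_h} → {w : W // w ≠ w_h} → Prop) (hst : J.IsStable μ')
    (hperfM : ∀ m, SMInst.MMatched μ' m) (hperfW : ∀ w, SMInst.WMatched μ' w) :
    I.IsStable (fun m w => (m = m_h ∧ w = w_h) ∨
      ∃ (hm : m ≠ m_h) (hw : w ≠ w_h), μ' ⟨m, hm⟩ ⟨w, hw⟩) ∧
    I.bal (fun m w => (m = m_h ∧ w = w_h) ∨
      ∃ (hm : m ≠ m_h) (hw : w ≠ w_h), μ' ⟨m, hm⟩ ⟨w, hw⟩) = J.bal μ' := by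
  change I.IsStable (SMInst.addPair m_h w_h μ') ∧ I.bal (SMInst.addPair m_h w_h μ') = J.bal μ'
  have hpm : ∀ m w, J.pm m w =
      I.pm m.1 w.1 + if m = ⟨m_s, hms⟩ then I.pm m_h w_h else 0 := fun m w => by
    simp only [hJpm, Subtype.ext_iff]
    split_ifs <;> rfl
  have hpw : ∀ w m, J.pw w m =
      I.pw w.1 m.1 + if w = ⟨w_s, hws⟩ then I.pw w_h m_h else 0 := fun w m => by
    simp only [hJpw, Subtype.ext_iff]
    split_ifs <;> rfl
  refine ⟨SMInst.isStable_addPair hacchh (fun w => (haccmh w).1) (fun m => (haccwh m).1)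
    hJacc hpm hpw hst, ?_⟩
  rw [SMInst.bal, SMInst.bal, SMInst.sumM_addPair, SMInst.sumW_addPair,
    SMInst.sumM_eq_add_of_pm_eq_add hst.1 hperfM hpm,
    SMInst.sumW_eq_add_of_pw_eq_add hst.1 hperfW hpw, Fintype.sum_ite_eq', Fintype.sum_ite_eq',
    add_comm (I.pm m_h w_h), add_comm (I.pw w_h m_h)]
end

section
/- If all stable matchings are perfect and μ is a stable matching containing an acceptable pair (m,w) with f_m(w) > (k − O_M) + f_m(μ_M(m)), then balance(μ) > k. -/
open scoped Classical

theorem Finset.add_sum_lt_sum_of_le_of_add_lt {ι κ : Type*} [AddCommMonoid κ] [PartialOrder κ]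
    [IsOrderedCancelAddMonoid κ] {s : Finset ι} {f g : ι → κ} {a : κ} {i : ι} (hi : i ∈ s)
    (hle : ∀ j ∈ s, f j ≤ g j) (hlt : a + f i < g i) :
    a + ∑ j ∈ s, f j < ∑ j ∈ s, g j := by
  rw [← Finset.add_sum_erase s f hi, ← Finset.add_sum_erase s g hi, ← add_assoc]
  exact add_lt_add_of_lt_of_le hlt (Finset.sum_le_sum fun j hj => hle j (Finset.mem_of_mem_erase hj))

theorem SMInst.add_sumME_lt_sumME_of_add_lt {M W : Type*} [Fintype M] (I : SMInst M W)
    {μ ν : M ≃ W} (hle : ∀ m, I.pm m (ν m) ≤ I.pm m (μ m)) {a : ℕ} {m : M}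
    (hlt : a + I.pm m (ν m) < I.pm m (μ m)) :
    a + I.sumME ν < I.sumME μ :=
  Finset.add_sum_lt_sum_of_le_of_add_lt (Finset.mem_univ m) (fun m' _ => hle m') hlt

theorem high_value_pair_exceeds_k_general {M W : Type*} [Fintype M] [Fintype W]
    (I : SMInst M W) (μ μM : M ≃ W) (k : ℕ)
    (hμ : I.IsStableE μ)
    (hmanOpt : ∀ e : M ≃ W, I.IsStableE e → ∀ m, I.pm m (μM m) ≤ I.pm m (e m))
    (m : M)
    (hgt : (k - I.sumME μM) + I.pm m (μM m) < I.pm m (μ m)) :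
    k < I.balE μ :=
  calc k ≤ (k - I.sumME μM) + I.sumME μM := le_tsub_add
    _ < I.sumME μ := I.add_sumME_lt_sumME_of_add_lt (hmanOpt μ hμ) hgt
    _ ≤ I.balE μ := le_max_left _ _

/-- If all stable matchings are perfect and the stable matching μ
contains an acceptable pair (m, w) with f_m(w) > (k − O_M) + f_m(μ_M(m)),
then balance(μ) > k. -/
theorem high_value_pair_exceeds_k {M W : Type*} [Fintype M] [Fintype W]
    (I : SMInst M W) (μ μM : M ≃ W) (k : ℕ)
    (hμ : I.IsStableE μ) (hμM : I.IsStableE μM)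
    (hmanOpt : ∀ e : M ≃ W, I.IsStableE e → ∀ m, I.pm m (μM m) ≤ I.pm m (e m))
    (m : M)
    (hgt : (k - I.sumME μM) + I.pm m (μM m) < I.pm m (μ m)) :
    k < I.balE μ :=
  high_value_pair_exceeds_k_general I μ μM k hμ hmanOpt m hgt
end

section
/- Let I be a Functional Stable Marriage instance, m a man and w a woman with f_m(μ_M(m)) > 1 and f_w(μ_W(w)) > 1. Let J be the instance obtained by decreasing all preference values of m and of w by 1 and decreasing k by 1. Then the set of stable matchings of I and J coincide, and for every stable matching μ (all perfect), balance_I(μ) = balance_J(μ) + 1; consequently Bal(I) ≤ k iff Bal(J) ≤ k−1. -/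
open scoped Classical

/-!
Every acceptable pair carries a value `≥ 1`, so on the values a blocking pair compares
(`f_m(w) < f_m(μ m)` with `w` acceptable, and likewise for women) subtracting `1` preserves
strict order, despite truncated subtraction: the stable matchings of `I` and `J` coincide. In a
perfect matching `m0` and `w0` each contribute exactly one term to their side of the balance, so
both sums, hence the balance, drop by one, and the threshold `k ≥ 1` becomes `k - 1`.
-/

theorem Fintype.sum_eq_sum_ite_sub_one_add_one {ι : Type*} [Fintype ι] (f : ι → ℕ) (i0 : ι)
    (h : 1 ≤ f i0) : ∑ i, f i = ∑ i, (if i = i0 then f i - 1 else f i) + 1 := by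
  rw [← Finset.add_sum_erase _ _ (Finset.mem_univ i0),
    ← Finset.add_sum_erase _ _ (Finset.mem_univ i0), if_pos rfl,
    Finset.sum_congr rfl fun i hi => if_neg (Finset.ne_of_mem_erase hi), add_right_comm,
    Nat.sub_add_cancel h]

theorem ite_sub_one_lt_ite_sub_one_iff {a b : ℕ} (p : Prop) [Decidable p] (ha : 1 ≤ a) :
    ((if p then a - 1 else a) < if p then b - 1 else b) ↔ a < b := by
  split_ifs
  · exact tsub_lt_tsub_iff_right ha
  · rfl

namespace SMInst

variable {M W : Type*} {I J : SMInst M W}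

theorem blocksE_iff_of_lt_iff (hacc : J.acc = I.acc)
    (hm : ∀ m w w', I.acc m w → (I.pm m w < I.pm m w' ↔ J.pm m w < J.pm m w'))
    (hw : ∀ w m m', I.acc m w → (I.pw w m < I.pw w m' ↔ J.pw w m < J.pw w m'))
    (e : M ≃ W) (m : M) (w : W) : I.BlocksE e m w ↔ J.BlocksE e m w := by
  rw [BlocksE, BlocksE, hacc]
  exact and_congr_right fun h => and_congr (hm m w _ h) (hw w m _ h)

theorem isStableE_iff_of_lt_iff (hacc : J.acc = I.acc)
    (hm : ∀ m w w', I.acc m w → (I.pm m w < I.pm m w' ↔ J.pm m w < J.pm m w'))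
    (hw : ∀ w m m', I.acc m w → (I.pw w m < I.pw w m' ↔ J.pw w m < J.pw w m'))
    (e : M ≃ W) : I.IsStableE e ↔ J.IsStableE e := by
  simp only [IsStableE, hacc, blocksE_iff_of_lt_iff hacc hm hw]

theorem isStableE_iff_of_shift {m0 : M} {w0 : W} (hacc : J.acc = I.acc)
    (hJpm : ∀ m w, J.pm m w = if m = m0 then I.pm m w - 1 else I.pm m w)
    (hJpw : ∀ w m, J.pw w m = if w = w0 then I.pw w m - 1 else I.pw w m)
    (hvalm : ∀ m w, I.acc m w → 1 ≤ I.pm m w) (hvalw : ∀ m w, I.acc m w → 1 ≤ I.pw w m)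
    (e : M ≃ W) : I.IsStableE e ↔ J.IsStableE e :=
  isStableE_iff_of_lt_iff hacc
    (fun m w _ h => by rw [hJpm, hJpm, ite_sub_one_lt_ite_sub_one_iff _ (hvalm m w h)])
    (fun w m _ h => by rw [hJpw, hJpw, ite_sub_one_lt_ite_sub_one_iff _ (hvalw m w h)]) e

theorem balE_eq_balE_add_one_of_shift [Fintype M] [Fintype W] {m0 : M} {w0 : W}
    (hJpm : ∀ m w, J.pm m w = if m = m0 then I.pm m w - 1 else I.pm m w)
    (hJpw : ∀ w m, J.pw w m = if w = w0 then I.pw w m - 1 else I.pw w m)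
    {e : M ≃ W} (hm0 : 1 ≤ I.pm m0 (e m0)) (hw0 : 1 ≤ I.pw w0 (e.symm w0)) :
    I.balE e = J.balE e + 1 := by
  have hsumM : I.sumME e = J.sumME e + 1 := by
    simp only [sumME, hJpm]
    exact Fintype.sum_eq_sum_ite_sub_one_add_one (fun m => I.pm m (e m)) m0 hm0
  have hsumW : I.sumWE e = J.sumWE e + 1 := by
    simp only [sumWE, hJpw]
    exact Fintype.sum_eq_sum_ite_sub_one_add_one (fun w => I.pw w (e.symm w)) w0 hw0
  rw [balE, balE, hsumM, hsumW, max_add_add_right]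

end SMInst

theorem shrink_gap_rule_general {M W : Type*} [Fintype M] [Fintype W]
    (I J : SMInst M W) (m0 : M) (w0 : W) (k : ℕ) (hk : 1 ≤ k)
    (hvalm : ∀ m w, I.acc m w → 1 ≤ I.pm m w)
    (hvalw : ∀ m w, I.acc m w → 1 ≤ I.pw w m)
    (hacc : J.acc = I.acc)
    (hJpm : ∀ m w, J.pm m w = if m = m0 then I.pm m w - 1 else I.pm m w)
    (hJpw : ∀ w m, J.pw w m = if w = w0 then I.pw w m - 1 else I.pw w m) :
    (∀ e : M ≃ W, I.IsStableE e ↔ J.IsStableE e) ∧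
    (∀ e : M ≃ W, I.IsStableE e → I.balE e = J.balE e + 1) ∧
    ((∃ e : M ≃ W, I.IsStableE e ∧ I.balE e ≤ k) ↔
      (∃ e : M ≃ W, J.IsStableE e ∧ J.balE e ≤ k - 1)) := by
  have hstable := SMInst.isStableE_iff_of_shift hacc hJpm hJpw hvalm hvalw
  have hbal : ∀ e : M ≃ W, I.IsStableE e → I.balE e = J.balE e + 1 := fun e he =>
    SMInst.balE_eq_balE_add_one_of_shift hJpm hJpw (hvalm _ _ (he.1 m0))
      (hvalw _ _ (by simpa using he.1 (e.symm w0)))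
  refine ⟨hstable, hbal, exists_congr fun e => ?_⟩
  rw [← hstable e]
  exact and_congr_right fun he => by rw [hbal e he]; omega

/-- Shrinking gaps. Decreasing all of m₀'s and w₀'s preference
values by 1 (and k by 1) preserves the set of (perfect) stable matchings,
decreases every balance by exactly 1, and hence Bal(I) ≤ k iff Bal(J) ≤ k − 1. -/
theorem shrink_gap_rule {M W : Type*} [Fintype M] [Fintype W]
    (I J : SMInst M W) (m0 : M) (w0 : W) (k : ℕ) (hk : 1 ≤ k)
    (μM μW : M ≃ W) (hμM : I.IsStableE μM) (hμW : I.IsStableE μW)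
    (hvalm : ∀ m w, I.acc m w → 1 ≤ I.pm m w)
    (hvalw : ∀ m w, I.acc m w → 1 ≤ I.pw w m)
    (hinjm : ∀ m w w', I.acc m w → I.acc m w' → I.pm m w = I.pm m w' → w = w')
    (hinjw : ∀ w m m', I.acc m w → I.acc m' w → I.pw w m = I.pw w m' → m = m')
    (hm0 : 1 < I.pm m0 (μM m0)) (hw0 : 1 < I.pw w0 (μW.symm w0))
    (hacc : J.acc = I.acc)
    (hJpm : ∀ m w, J.pm m w = if m = m0 then I.pm m w - 1 else I.pm m w)
    (hJpw : ∀ w m, J.pw w m = if w = w0 then I.pw w m - 1 else I.pw w m) :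
    (∀ e : M ≃ W, I.IsStableE e ↔ J.IsStableE e) ∧
    (∀ e : M ≃ W, I.IsStableE e → I.balE e = J.balE e + 1) ∧
    ((∃ e : M ≃ W, I.IsStableE e ∧ I.balE e ≤ k) ↔
      (∃ e : M ≃ W, J.IsStableE e ∧ J.balE e ≤ k - 1)) :=
  shrink_gap_rule_general I J m0 w0 k hk hvalm hvalw hacc hJpm hJpw
end

section
/- (Rural Hospitals Theorem) In any instance of Stable Marriage, the set of people who are matched is the same in every stable matching: if μ and μ' are both stable, then a person a is matched by μ if and only if a is matched by μ'. -/
/-!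
Let `A` be the men who strictly prefer their `μ`-partner to their `μ'`-situation (being single
counts as worst) and `B` the women who strictly prefer their `μ'`-partner to their
`μ`-situation. Stability of `μ'` sends the `μ`-partner of each man of `A` into `B`, and
stability of `μ` sends the `μ'`-partner of each woman of `B` into `A`, both injectively.
Hence `#A ≤ #B ≤ #{m ∈ A | m is matched by μ'}`, so every man of `A` is matched by `μ'`.
A man matched by `μ` but single in `μ'` would lie in `A`. Exchanging the sexes handles women.
-/

open scoped Classical

namespace SMInst

variable {M W : Type*}

def swap (I : SMInst M W) : SMInst W M := ⟨fun w m => I.acc m w, I.pw, I.pm⟩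

/-- `m` strictly prefers his `μ`-partner to his situation under `μ'`; being single in `μ'`
counts as worst. -/
def Prefers (I : SMInst M W) (μ μ' : M → W → Prop) (m : M) : Prop :=
  ∃ w, μ m w ∧ ∀ w', μ' m w' → I.pm m w < I.pm m w'

variable {I : SMInst M W} {μ μ' : M → W → Prop}

theorem IsMatching.swap (hμ : I.IsMatching μ) : I.swap.IsMatching (flip μ) :=
  ⟨fun w m h => hμ.1 m w h, fun w m m' h h' => hμ.2.2 m m' w h h',
    fun w w' m h h' => hμ.2.1 m w w' h h'⟩

theorem IsStable.swap (hμ : I.IsStable μ) : I.swap.IsStable (flip μ) :=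
  ⟨hμ.1.swap, fun w m ⟨hacc, hw, hm⟩ => hμ.2 m w ⟨hacc, hm, hw⟩⟩

theorem Prefers.exists_partner_swap_prefers
    (hinjw : ∀ w m m', I.acc m w → I.acc m' w → I.pw w m = I.pw w m' → m = m')
    (hμ : I.IsMatching μ) (hμ' : I.IsStable μ') {m : M} (hm : I.Prefers μ μ' m) :
    ∃ w, μ m w ∧ I.swap.Prefers (flip μ') (flip μ) w := by
  obtain ⟨w, hmw, hpref⟩ := hm
  refine ⟨w, hmw, ?_⟩
  have hrival : ¬ ∀ m', μ' m' w → I.pw w m < I.pw w m' :=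
    fun h => hμ'.2 m w ⟨hμ.1 m w hmw, hpref, h⟩
  push Not at hrival
  obtain ⟨m', hm'w, hle⟩ := hrival
  have hne : m' ≠ m := by
    rintro rfl
    exact (hpref w hm'w).false
  refine ⟨m', hm'w, fun m'' hm''w => ?_⟩
  obtain rfl := hμ.2.2 m'' m w hm''w hmw
  exact hle.lt_of_ne fun h => hne (hinjw w m' m'' (hμ'.1.1 _ _ hm'w) (hμ.1 _ _ hmw) h)

theorem Prefers.mMatched [Fintype M] [Fintype W]
    (hinjm : ∀ m w w', I.acc m w → I.acc m w' → I.pm m w = I.pm m w' → w = w')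
    (hinjw : ∀ w m m', I.acc m w → I.acc m' w → I.pw w m = I.pw w m' → m = m')
    (hμ : I.IsStable μ) (hμ' : I.IsStable μ') {m : M} (hm : I.Prefers μ μ' m) :
    MMatched μ' m := by
  set A := Finset.univ.filter (I.Prefers μ μ')
  set B := Finset.univ.filter (I.swap.Prefers (flip μ') (flip μ))
  set A' := A.filter (MMatched μ')
  have hAB : A.card ≤ B.card := by
    refine Finset.card_le_card_of_forall_subsingleton μ (fun m hm => ?_)
      fun w _ m₁ hm₁ m₂ hm₂ => hμ.1.2.2 m₁ m₂ w hm₁.2 hm₂.2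
    obtain ⟨w, hmw, hw⟩ :=
      (Finset.mem_filter.1 hm).2.exists_partner_swap_prefers hinjw hμ.1 hμ'
    exact ⟨w, Finset.mem_filter.2 ⟨Finset.mem_univ w, hw⟩, hmw⟩
  have hBA' : B.card ≤ A'.card := by
    refine Finset.card_le_card_of_forall_subsingleton (flip μ') (fun w hw => ?_)
      fun m _ w₁ hw₁ w₂ hw₂ => hμ'.1.2.1 m w₁ w₂ hw₁.2 hw₂.2
    obtain ⟨m, hmw, hm⟩ :=
      Prefers.exists_partner_swap_prefers (I := I.swap) hinjm hμ'.1.swap hμ.swap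
        (Finset.mem_filter.1 hw).2
    exact ⟨m, Finset.mem_filter.2 ⟨Finset.mem_filter.2 ⟨Finset.mem_univ m, hm⟩, w, hmw⟩, hmw⟩
  have hA' : A' = A := Finset.eq_of_subset_of_card_le (Finset.filter_subset _ _) (hAB.trans hBA')
  have hmA' : m ∈ A' := hA' ▸ Finset.mem_filter.2 ⟨Finset.mem_univ m, hm⟩
  exact (Finset.mem_filter.1 hmA').2

theorem IsStable.mMatched_of_mMatched [Fintype M] [Fintype W]
    (hinjm : ∀ m w w', I.acc m w → I.acc m w' → I.pm m w = I.pm m w' → w = w')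
    (hinjw : ∀ w m m', I.acc m w → I.acc m' w → I.pw w m = I.pw w m' → m = m')
    (hμ : I.IsStable μ) (hμ' : I.IsStable μ') {m : M} (hm : MMatched μ m) :
    MMatched μ' m := by
  by_contra hsingle
  obtain ⟨w, hmw⟩ := hm
  exact hsingle <| Prefers.mMatched hinjm hinjw hμ hμ'
    ⟨w, hmw, fun w' hmw' => (hsingle ⟨w', hmw'⟩).elim⟩

end SMInst

/-- Rural Hospitals Theorem: the set of matched people is the
same in every stable matching. -/
theorem rural_hospitals {M W : Type*} [Fintype M] [Fintype W] (I : SMInst M W)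
    (hinjm : ∀ m w w', I.acc m w → I.acc m w' → I.pm m w = I.pm m w' → w = w')
    (hinjw : ∀ w m m', I.acc m w → I.acc m' w → I.pw w m = I.pw w m' → m = m')
    (μ μ' : M → W → Prop) (hμ : I.IsStable μ) (hμ' : I.IsStable μ') :
    (∀ m, SMInst.MMatched μ m ↔ SMInst.MMatched μ' m) ∧
    (∀ w, SMInst.WMatched μ w ↔ SMInst.WMatched μ' w) :=
  ⟨fun _ => ⟨hμ.mMatched_of_mMatched hinjm hinjw hμ', hμ'.mMatched_of_mMatched hinjm hinjw hμ⟩,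
    fun _ => ⟨hμ.swap.mMatched_of_mMatched hinjw hinjm hμ'.swap,
      hμ'.swap.mMatched_of_mMatched hinjw hinjm hμ.swap⟩⟩
end
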